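/- In the MinBox(n, D, α, b) game with α < 1/(b+1) and D ≥ b(ln n + 1)/(1 − α(b+1)), if Maker always claims a free element from a free active box with maximal danger value, then at the end of the game every box F satisfies w_M(F) ≥ α|F|; that is, Maker wins. -/

import Mathlib

namespace MinBox

variable {α : Type*} [DecidableEq α]

/-- The box `i` is free: it still has an unclaimed element (w.r.t. Maker's set `M` and
Breaker's set `B`). -/
def Free {n : ℕ} (boxes : Fin n → Finset α) (M B : Finset α) (i : Fin n) : Prop :=
  (boxes i \ (M ∪ B)).Nonempty

/-- The box `i` is active: Maker owns fewer than `a·|Fᵢ|` of its elements. -/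
def Active {n : ℕ} (a : ℝ) (boxes : Fin n → Finset α) (M : Finset α) (i : Fin n) : Prop :=
  ((M ∩ boxes i).card : ℝ) < a * ((boxes i).card : ℝ)

/-- The danger value `danger(Fᵢ) = w_B(Fᵢ) − b·w_M(Fᵢ)` of the box `i`. -/
def danger {n : ℕ} (b : ℕ) (boxes : Fin n → Finset α) (M B : Finset α) (i : Fin n) : ℝ :=
  ((B ∩ boxes i).card : ℝ) - (b : ℝ) * ((M ∩ boxes i).card : ℝ)

end MinBox

/-!
By induction on the turn, any `k` boxes that are free and active at a Maker turn have total danger at most `b · k (1/k + ⋯ + 1/n)`: Breaker raises the total danger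
of a family by at most `b`, and Maker's move lowers it by `b` if Maker played in the family;
otherwise, since Maker played in a box at least as dangerous as each of the `k` boxes,
adding that box to the family and averaging gives the recurrence of the bound. In particular a
free active box has danger at most `b (ln n + 1)` right after the next Maker move. If a box `F` ended
active, look at the first Maker move after which `F` is no longer free: then `F` is fully
claimed, so its danger is `|F| − (b + 1) w_M(F) > |F| (1 − α (b + 1))`, which contradicts the
size assumption.
-/

open Finset Function

theorem Nat.exists_lt_and_not_succ {p : ℕ → Prop} (h0 : p 0) {t : ℕ} (ht : ¬ p t) :
    ∃ s < t, p s ∧ ¬ p (s + 1) := by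
  induction t with
  | zero => exact absurd h0 ht
  | succ t ih =>
    by_cases hp : p t
    · exact ⟨t, t.lt_succ_self, hp, ht⟩
    · obtain ⟨s, hs, hps⟩ := ih hp
      exact ⟨s, hs.trans t.lt_succ_self, hps⟩

theorem Finset.card_add_one_mul_sum_le {ι : Type*} {T : Finset ι} {f : ι → ℝ} {d C : ℝ}
    (hf : ∀ i ∈ T, f i ≤ d) (hC : ∑ i ∈ T, f i + d ≤ C) :
    (T.card + 1) * ∑ i ∈ T, f i ≤ T.card * C := by
  have hsum : ∑ i ∈ T, f i ≤ T.card * d := by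
    simpa only [nsmul_eq_mul] using sum_le_card_nsmul T f d hf
  have hk : (T.card : ℝ) * (∑ i ∈ T, f i + d) ≤ T.card * C :=
    mul_le_mul_of_nonneg_left hC (Nat.cast_nonneg _)
  linarith

namespace MinBox

variable {α : Type*} [DecidableEq α] {n b : ℕ} {a : ℝ} {boxes : Fin n → Finset α}

theorem sum_card_inter_le_card {ι : Type*} {s : ι → Finset α}
    (hdisj : Pairwise (Disjoint on s)) (T : Finset ι) (S : Finset α) :
    ∑ i ∈ T, (S ∩ s i).card ≤ S.card := by
  rw [← card_biUnion fun i _ j _ hij => (hdisj hij).mono inter_subset_right inter_subset_right]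
  exact card_le_card (biUnion_subset.2 fun _ _ => inter_subset_left)

/-- `b * dangerBound n k` bounds the total danger of `k` free active boxes; `dangerBound n 1` is
the harmonic number `H_n`. -/
noncomputable def dangerBound (n k : ℕ) : ℝ := k * ∑ j ∈ Icc k n, (j : ℝ)⁻¹

theorem one_le_dangerBound {k : ℕ} (hk : 1 ≤ k) (hkn : k ≤ n) : 1 ≤ dangerBound n k := by
  have hk0 : (0 : ℝ) < k := by exact_mod_cast hk
  calc (1 : ℝ) = k * (k : ℝ)⁻¹ := (mul_inv_cancel₀ hk0.ne').symm
    _ ≤ dangerBound n k := by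
      refine mul_le_mul_of_nonneg_left ?_ hk0.le
      exact single_le_sum (f := fun j : ℕ => (j : ℝ)⁻¹) (fun j _ => by positivity)
        (mem_Icc.2 ⟨le_rfl, hkn⟩)

theorem dangerBound_succ {k : ℕ} (hk : 1 ≤ k) (hkn : k ≤ n) :
    (k + 1) * (dangerBound n k - 1) = k * dangerBound n (k + 1) := by
  have hIcc : Icc k n = insert k (Icc (k + 1) n) := by
    rw [Icc_add_one_left_eq_Ioc, Ioc_insert_left hkn]
  have hk0 : (k : ℝ) ≠ 0 := by positivity
  rw [dangerBound, dangerBound, hIcc, sum_insert (by simp)]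
  push_cast
  field_simp
  ring

theorem dangerBound_one_le : dangerBound n 1 ≤ Real.log n + 1 := by
  have hH : dangerBound n 1 = (harmonic n : ℝ) := by
    rw [dangerBound, harmonic_eq_sum_Icc]
    push_cast
    ring
  linarith [hH, harmonic_le_one_add_log n]

theorem dangerBound_two_le (hn : 1 ≤ n) : dangerBound n 2 ≤ 2 * Real.log n := by
  have h := dangerBound_succ le_rfl hn
  norm_num at h
  linarith [dangerBound_one_le (n := n)]

theorem danger_insert_add_le {M B B' : Finset α} {x : α} (hx : x ∉ M) (i : Fin n) :
    danger b boxes (insert x M) B' i + (if x ∈ boxes i then (b : ℝ) else 0) ≤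
      danger b boxes M B i + ((B' \ B) ∩ boxes i).card := by
  have hB : (B' ∩ boxes i).card ≤ ((B' \ B) ∩ boxes i).card + (B ∩ boxes i).card := by
    refine (card_le_card fun y hy => ?_).trans (card_union_le _ _)
    simp only [mem_union, mem_inter, mem_sdiff] at hy ⊢
    tauto
  have hB' : ((B' ∩ boxes i).card : ℝ) ≤ ((B' \ B) ∩ boxes i).card + (B ∩ boxes i).card := by
    exact_mod_cast hB
  unfold danger
  split_ifs with hxi
  · rw [insert_inter_of_mem hxi, card_insert_of_notMem fun h => hx (mem_inter.1 h).1]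
    push_cast
    linarith
  · rw [insert_inter_of_notMem hxi]
    linarith

theorem sum_danger_insert_add_le (hdisj : Pairwise (Disjoint on boxes)) {M B B' : Finset α} {x : α} {c : Fin n}
    (hxc : x ∈ boxes c) (hx : x ∉ M) (hB : (B' \ B).card ≤ b) (T : Finset (Fin n)) :
    ∑ i ∈ T, danger b boxes (insert x M) B' i + (if c ∈ T then (b : ℝ) else 0) ≤
      ∑ i ∈ T, danger b boxes M B i + b := by
  have hstep := sum_le_sum fun i (_ : i ∈ T) =>
    danger_insert_add_le (b := b) (boxes := boxes) (B := B) (B' := B') hx i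
  rw [sum_add_distrib, sum_add_distrib] at hstep
  have hnew : ∑ i ∈ T, (((B' \ B) ∩ boxes i).card : ℝ) ≤ b := by
    exact_mod_cast (sum_card_inter_le_card hdisj T _).trans hB
  have hc : (if c ∈ T then (b : ℝ) else 0) ≤ ∑ i ∈ T, if x ∈ boxes i then (b : ℝ) else 0 := by
    split_ifs with hcT
    · simpa [hxc] using single_le_sum (f := fun i => if x ∈ boxes i then (b : ℝ) else 0)
        (fun i _ => by positivity) hcT
    · exact sum_nonneg fun i _ => by positivity
  linarith

theorem danger_eq_of_subset_union {M B : Finset α} {i : Fin n}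
    (hMB : Disjoint M B) (hi : boxes i ⊆ M ∪ B) :
    danger b boxes M B i = (boxes i).card - (b + 1) * (M ∩ boxes i).card := by
  have hcard : (M ∩ boxes i).card + (B ∩ boxes i).card = (boxes i).card := by
    rw [← card_union_of_disjoint (hMB.mono inter_subset_left inter_subset_left),
      ← union_inter_distrib_right, inter_eq_right.2 hi]
  unfold danger
  rw [← hcard]
  push_cast
  ring

theorem Free.anti {M M' B B' : Finset α} {i : Fin n}
    (hM : M ⊆ M') (hB : B ⊆ B') (h : Free boxes M' B' i) : Free boxes M B i :=
  h.mono (sdiff_subset_sdiff subset_rfl (union_subset_union hM hB))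

theorem Active.anti {M M' : Finset α} {i : Fin n}
    (hM : M ⊆ M') (h : Active a boxes M' i) : Active a boxes M i :=
  lt_of_le_of_lt (by exact_mod_cast card_le_card (inter_subset_inter hM subset_rfl)) h

def FreeActive (a : ℝ) (boxes : Fin n → Finset α) (M B : Finset α) (i : Fin n) : Prop :=
  Free boxes M B i ∧ Active a boxes M i

theorem FreeActive.anti {M M' B B' : Finset α} {i : Fin n}
    (hM : M ⊆ M') (hB : B ⊆ B') (h : FreeActive a boxes M' B' i) : FreeActive a boxes M B i :=
  ⟨h.1.anti hM hB, h.2.anti hM⟩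

/-- A play in which, in round `t`, Breaker first claims at most `b` new elements (going from
`B t` to `B (t + 1)`), and then Maker, facing `B (t + 1)`, claims a free element of a free active
box of maximal danger if there is one. -/
structure GreedyPlay (n b : ℕ) (a : ℝ) (boxes : Fin n → Finset α) where
  M : ℕ → Finset α
  B : ℕ → Finset α
  M_zero : M 0 = ∅
  B_zero : B 0 = ∅
  disjoint : ∀ t, Disjoint (M t) (B t)
  B_mono : ∀ t, B t ⊆ B (t + 1)
  card_B_sdiff_le : ∀ t, (B (t + 1) \ B t).card ≤ b
  maker_move : ∀ t, (∃ i, FreeActive a boxes (M t) (B (t + 1)) i) →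
    ∃ i x, FreeActive a boxes (M t) (B (t + 1)) i ∧
      (∀ j, FreeActive a boxes (M t) (B (t + 1)) j →
        danger b boxes (M t) (B (t + 1)) j ≤ danger b boxes (M t) (B (t + 1)) i) ∧
      x ∈ boxes i \ (M t ∪ B (t + 1)) ∧ M (t + 1) = insert x (M t)
  maker_skip : ∀ t, (¬ ∃ i, FreeActive a boxes (M t) (B (t + 1)) i) → M (t + 1) = M t

namespace GreedyPlay

variable (P : GreedyPlay n b a boxes)

theorem M_monotone : Monotone P.M := by
  refine monotone_nat_of_le_succ fun t => ?_
  by_cases h : ∃ i, FreeActive a boxes (P.M t) (P.B (t + 1)) i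
  · obtain ⟨i, x, -, -, -, hMx⟩ := P.maker_move t h
    exact hMx ▸ subset_insert x _
  · exact (P.maker_skip t h).ge

theorem card_B_one_le : (P.B 1).card ≤ b := by
  simpa [P.B_zero] using P.card_B_sdiff_le 0

theorem sum_danger_le (hdisj : Pairwise (Disjoint on boxes)) (t : ℕ) {T : Finset (Fin n)}
    (hT : T.Nonempty) (hopen : ∀ i ∈ T, FreeActive a boxes (P.M t) (P.B (t + 1)) i) :
    ∑ i ∈ T, danger b boxes (P.M t) (P.B (t + 1)) i ≤ b * dangerBound n T.card := by
  have hkn : T.card ≤ n := (card_le_univ T).trans_eq (Fintype.card_fin n)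
  induction t generalizing T with
  | zero =>
    have hsum : ∑ i ∈ T, danger b boxes (P.M 0) (P.B 1) i ≤ b := by
      simp only [danger, P.M_zero, empty_inter, card_empty, Nat.cast_zero, mul_zero, sub_zero]
      exact_mod_cast (sum_card_inter_le_card hdisj T (P.B 1)).trans P.card_B_one_le
    have hbound := one_le_dangerBound (card_pos.2 hT) hkn
    nlinarith
  | succ t ih =>
    have hopen' i (hi : i ∈ T) : FreeActive a boxes (P.M t) (P.B (t + 1)) i :=
      (hopen i hi).anti (P.M_monotone t.le_succ) (P.B_mono _)
    obtain ⟨c, x, hc, hmax, hx, hMx⟩ := P.maker_move t (hT.imp hopen')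
    rw [mem_sdiff, mem_union, not_or] at hx
    have hstep := sum_danger_insert_add_le hdisj hx.1 hx.2.1 (P.card_B_sdiff_le (t + 1)) T
    rw [← hMx] at hstep
    split_ifs at hstep with hcT
    · linarith [ih hT hopen' hkn]
    -- Maker played outside `T`: average over `T` together with Maker's box `c`.
    · have hkn' : T.card + 1 ≤ n := by
        simpa [card_insert_of_notMem hcT] using (card_le_univ (insert c T)).trans_eq
          (Fintype.card_fin n)
      have hins := ih (insert_nonempty c T) ((forall_mem_insert _ _ _).2 ⟨hc, hopen'⟩)
        (by rwa [card_insert_of_notMem hcT])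
      rw [sum_insert hcT, card_insert_of_notMem hcT, add_comm] at hins
      have havg := card_add_one_mul_sum_le (fun i hi => hmax i (hopen' i hi)) hins
      rw [mul_left_comm, ← dangerBound_succ (card_pos.2 hT) hkn, mul_left_comm] at havg
      have := le_of_mul_le_mul_left havg (by positivity)
      linarith

theorem danger_succ_le (hdisj : Pairwise (Disjoint on boxes)) {t : ℕ} {i : Fin n}
    (hi : FreeActive a boxes (P.M t) (P.B (t + 1)) i) :
    danger b boxes (P.M (t + 1)) (P.B (t + 1 + 1)) i ≤ b * (Real.log n + 1) := by
  obtain ⟨c, x, hc, hmax, hx, hMx⟩ := P.maker_move t ⟨i, hi⟩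
  rw [mem_sdiff, mem_union, not_or] at hx
  have hstep := danger_insert_add_le (b := b) (boxes := boxes) (B := P.B (t + 1))
    (B' := P.B (t + 1 + 1)) hx.2.1 i
  rw [← hMx] at hstep
  have hnew : (((P.B (t + 1 + 1) \ P.B (t + 1)) ∩ boxes i).card : ℝ) ≤ b := by
    exact_mod_cast (card_le_card inter_subset_left).trans (P.card_B_sdiff_le _)
  have hb : (0 : ℝ) ≤ b := Nat.cast_nonneg b
  by_cases hxi : x ∈ boxes i
  · have hsingle := P.sum_danger_le hdisj t (singleton_nonempty i) (by simpa using hi)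
    rw [sum_singleton, card_singleton] at hsingle
    rw [if_pos hxi] at hstep
    nlinarith [mul_le_mul_of_nonneg_left (dangerBound_one_le (n := n)) hb]
  -- Maker played in another box `c`, at least as dangerous as `i`.
  · have hci : i ≠ c := by rintro rfl; exact hxi hx.1
    have hpair := P.sum_danger_le hdisj t (insert_nonempty i {c})
      ((forall_mem_insert _ _ _).2 ⟨hi, by simpa using hc⟩)
    rw [sum_pair hci, card_pair hci] at hpair
    rw [if_neg hxi] at hstep
    nlinarith [hmax i hi, mul_le_mul_of_nonneg_left (dangerBound_two_le i.pos) hb]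

theorem card_mul_lt_of_active_of_subset (hdisj : Pairwise (Disjoint on boxes)) {t : ℕ}
    {i : Fin n} (hclaimed : boxes i ⊆ P.M t ∪ P.B t) (hactive : Active a boxes (P.M t) i) :
    (boxes i).card * (1 - a * (b + 1)) < b * (Real.log n + 1) := by
  have hpos : 0 < a * (boxes i).card := lt_of_le_of_lt (by positivity) hactive
  have hlog : 0 ≤ Real.log n := Real.log_natCast_nonneg n
  by_cases h0 : Free boxes (P.M 0) (P.B 1) i
  · have hend : ¬ Free boxes (P.M t) (P.B (t + 1)) i := by
      rw [Free, not_nonempty_iff_eq_empty, sdiff_eq_empty_iff_subset]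
      exact hclaimed.trans (union_subset_union subset_rfl (P.B_mono t))
    obtain ⟨s, hst, hfree, hclosed⟩ :=
      Nat.exists_lt_and_not_succ (p := fun s => Free boxes (P.M s) (P.B (s + 1)) i) h0 hend
    rw [Free, not_nonempty_iff_eq_empty, sdiff_eq_empty_iff_subset] at hclosed
    have hact : Active a boxes (P.M (s + 1)) i := hactive.anti (P.M_monotone hst)
    have heq := danger_eq_of_subset_union (b := b)
      ((P.disjoint (s + 1 + 1)).mono_left (P.M_monotone (s + 1).le_succ)) hclosed
    have hle := P.danger_succ_le hdisj ⟨hfree, hact.anti (P.M_monotone s.le_succ)⟩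
    have hlt := mul_lt_mul_of_pos_left hact (by positivity : (0 : ℝ) < b + 1)
    nlinarith
  · rw [Free, P.M_zero, empty_union, not_nonempty_iff_eq_empty, sdiff_eq_empty_iff_subset] at h0
    have hcard : ((boxes i).card : ℝ) ≤ b := by
      exact_mod_cast (card_le_card h0).trans P.card_B_one_le
    nlinarith

end GreedyPlay

end MinBox

theorem minBox_maker_wins_general {α : Type*} [DecidableEq α]
    (n D b : ℕ)
    (a : ℝ) (ha1 : a < 1 / ((b : ℝ) + 1))
    (hDsize : (b : ℝ) * (Real.log n + 1) / (1 - a * ((b : ℝ) + 1)) ≤ (D : ℝ))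
    (boxes : Fin n → Finset α)
    (hdisj : ∀ i j, i ≠ j → Disjoint (boxes i) (boxes j))
    (hsize : ∀ i, D ≤ (boxes i).card)
    (M B : ℕ → Finset α)
    (hM0 : M 0 = ∅) (hB0 : B 0 = ∅)
    (hMB : ∀ t, Disjoint (M t) (B t))
    (hBmono : ∀ t, B t ⊆ B (t + 1))
    (hBbias : ∀ t, (B (t + 1) \ B t).card ≤ b)
    (hMakerMove : ∀ t,
      (∃ i, MinBox.Free boxes (M t) (B (t + 1)) i ∧ MinBox.Active a boxes (M t) i) →
      ∃ i x, MinBox.Free boxes (M t) (B (t + 1)) i ∧ MinBox.Active a boxes (M t) i ∧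
        (∀ j, MinBox.Free boxes (M t) (B (t + 1)) j →
          MinBox.Active a boxes (M t) j →
          MinBox.danger b boxes (M t) (B (t + 1)) j ≤
            MinBox.danger b boxes (M t) (B (t + 1)) i) ∧
        x ∈ boxes i \ (M t ∪ B (t + 1)) ∧ M (t + 1) = insert x (M t))
    (hMakerSkip : ∀ t,
      (¬ ∃ i, MinBox.Free boxes (M t) (B (t + 1)) i ∧ MinBox.Active a boxes (M t) i) →
      M (t + 1) = M t) :
    ∀ t, (∀ i, boxes i ⊆ M t ∪ B t) →
      ∀ i, a * ((boxes i).card : ℝ) ≤ ((M t ∩ boxes i).card : ℝ) := by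
  intro t hclaimed i
  by_contra! hactive
  let P : MinBox.GreedyPlay n b a boxes :=
    { M, B, M_zero := hM0, B_zero := hB0, disjoint := hMB, B_mono := hBmono,
      card_B_sdiff_le := hBbias,
      maker_move := fun t h => by
        obtain ⟨i, x, hfree, hact, hmax, hx⟩ := hMakerMove t h
        exact ⟨i, x, ⟨hfree, hact⟩, fun j hj => hmax j hj.1 hj.2, hx⟩
      maker_skip := hMakerSkip }
  have hslack : 0 < 1 - a * (b + 1) := by
    rw [lt_div_iff₀ (by positivity)] at ha1
    linarith
  have hbig : b * (Real.log n + 1) ≤ (boxes i).card * (1 - a * (b + 1)) := by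
    rw [div_le_iff₀ hslack] at hDsize
    exact hDsize.trans (mul_le_mul_of_nonneg_right (by exact_mod_cast hsize i) hslack.le)
  exact (P.card_mul_lt_of_active_of_subset (fun i j hij => hdisj i j hij) (hclaimed i)
    hactive).not_ge hbig

/-- In the `MinBox(n, D, a, b)` game with `a < 1/(b+1)` and
`D ≥ b(ln n + 1)/(1 − a(b+1))`, if Maker always claims a free element from a free
active box of maximal danger, then at the end of the game (i.e. at any time at which
every element is claimed) every box `Fᵢ` satisfies `w_M(Fᵢ) ≥ a·|Fᵢ|`; that is, Maker
wins.  The play is modelled as in Statement 6. -/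
theorem minBox_maker_wins {α : Type*} [DecidableEq α]
    (n D b : ℕ) (hn : 0 < n) (hD : 0 < D) (hb : 0 < b)
    (a : ℝ) (ha0 : 0 < a) (ha1 : a < 1 / ((b : ℝ) + 1))
    (hDsize : (b : ℝ) * (Real.log n + 1) / (1 - a * ((b : ℝ) + 1)) ≤ (D : ℝ))
    (boxes : Fin n → Finset α)
    (hdisj : ∀ i j, i ≠ j → Disjoint (boxes i) (boxes j))
    (hsize : ∀ i, D ≤ (boxes i).card)
    (M B : ℕ → Finset α)
    (hM0 : M 0 = ∅) (hB0 : B 0 = ∅)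
    (hMboard : ∀ t, ∀ x ∈ M t, ∃ i, x ∈ boxes i)
    (hBboard : ∀ t, ∀ x ∈ B t, ∃ i, x ∈ boxes i)
    (hMB : ∀ t, Disjoint (M t) (B t))
    (hBmono : ∀ t, B t ⊆ B (t + 1))
    (hBbias : ∀ t, (B (t + 1) \ B t).card ≤ b)
    (hBnew : ∀ t, Disjoint (B (t + 1) \ B t) (M t))
    (hMakerMove : ∀ t,
      (∃ i, MinBox.Free boxes (M t) (B (t + 1)) i ∧ MinBox.Active a boxes (M t) i) →
      ∃ i x, MinBox.Free boxes (M t) (B (t + 1)) i ∧ MinBox.Active a boxes (M t) i ∧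
        (∀ j, MinBox.Free boxes (M t) (B (t + 1)) j →
          MinBox.Active a boxes (M t) j →
          MinBox.danger b boxes (M t) (B (t + 1)) j ≤
            MinBox.danger b boxes (M t) (B (t + 1)) i) ∧
        x ∈ boxes i \ (M t ∪ B (t + 1)) ∧ M (t + 1) = insert x (M t))
    (hMakerSkip : ∀ t,
      (¬ ∃ i, MinBox.Free boxes (M t) (B (t + 1)) i ∧ MinBox.Active a boxes (M t) i) →
      M (t + 1) = M t) :
    ∀ t, (∀ i, boxes i ⊆ M t ∪ B t) →
      ∀ i, a * ((boxes i).card : ℝ) ≤ ((M t ∩ boxes i).card : ℝ) :=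
  minBox_maker_wins_general n D b a ha1 hDsize boxes hdisj hsize M B hM0 hB0 hMB hBmono hBbias
    hMakerMove hMakerSkip
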